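/- arXiv:hep-th/9801168 — 2 statements merged into one kernel-verified Lean document; each statement's English description precedes it below -/
import Mathlib

section
/- The alternating sum ∑_{n=1}^∞ (-1)^n H_n / n^2 equals -(5/8)ζ(3). -/
/-!
Write `t(a, b) = 1 / (a b (a + b))` for `a, b ≥ 1`. Summing the Tornheim series `∑ t` by rows
(telescoping: `∑_b t(a, b) = H_a / a²`) and by antidiagonals (partial fractions:
`∑_{a+b=N} t(a, b) = 2 H_{N-1} / N²`) gives Euler's `∑ H_n / n² = 2 ζ(3)`. With the weights
`(-1)^a` and `(-1)^(a+b)` the same two summations express the signed series through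
`S = ∑ (-1)^n H_n / n²` and `∑ (-1)^n / n³ = -(3/4) ζ(3)`. Finally, `t` is homogeneous of degree
`-3`, so its sum over even `a` and even `b` is `∑ t / 8`; writing the indicator of that set as
`(1 + (-1)^a)(1 + (-1)^b) / 4` turns this into a linear relation between the three double sums,
which determines `S`.
-/

open scoped BigOperators

noncomputable def H (n : ℕ) : ℝ := ∑ j ∈ Finset.range n, (1:ℝ)/(j+1)

noncomputable def zeta3 : ℝ := ∑' n : ℕ, (1:ℝ)/((n:ℝ)+1)^3

open Finset Filter Topology

theorem tendsto_sum_range_sub_add {G : Type*} [AddCommGroup G] [TopologicalSpace G]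
    [IsTopologicalAddGroup G] {f : ℕ → G} (hf : Tendsto f atTop (𝓝 0)) (k : ℕ) :
    Tendsto (fun N ↦ ∑ n ∈ range N, (f n - f (n + k))) atTop (𝓝 (∑ i ∈ range k, f i)) := by
  have hpartial (N : ℕ) :
      ∑ n ∈ range N, (f n - f (n + k)) = ∑ i ∈ range k, f i - ∑ i ∈ range k, f (N + i) := by
    have hkN : ∑ n ∈ range (N + k), f n = ∑ i ∈ range k, f i + ∑ n ∈ range N, f (n + k) := by
      rw [add_comm N k, sum_range_add]
      simp_rw [add_comm k]
    rw [Finset.sum_sub_distrib, sub_eq_sub_iff_add_eq_add, ← sum_range_add, hkN]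
  have htail : Tendsto (fun N ↦ ∑ i ∈ range k, f (N + i)) atTop (𝓝 0) := by
    simpa using tendsto_finsetSum (range k) fun i _ ↦ hf.comp (tendsto_add_atTop_nat i)
  simpa [hpartial] using tendsto_const_nhds.sub htail

theorem hasSum_sub_add_of_antitone {f : ℕ → ℝ} (hmono : Antitone f)
    (hf : Tendsto f atTop (𝓝 0)) (k : ℕ) :
    HasSum (fun n ↦ f n - f (n + k)) (∑ i ∈ range k, f i) :=
  (hasSum_iff_tendsto_nat_of_nonneg (fun n ↦ sub_nonneg.2 (hmono (Nat.le_add_right n k))) _).2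
    (tendsto_sum_range_sub_add hf k)

theorem Summable.mul_of_abs_le_one {ι : Type*} {f c : ι → ℝ} (hf : Summable f)
    (hc : ∀ i, |c i| ≤ 1) : Summable fun i ↦ c i * f i :=
  (summable_abs_iff.2 hf).of_norm_bounded fun i ↦ by
    rw [Real.norm_eq_abs, abs_mul]
    exact mul_le_of_le_one_left (abs_nonneg _) (hc i)

theorem Summable.tsum_prod_eq_tsum_sum_antidiagonal {A α : Type*} [AddCommMonoid A]
    [HasAntidiagonal A] [AddCommMonoid α] [TopologicalSpace α] [ContinuousAdd α] [T3Space α]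
    {f : A × A → α} (hf : Summable f) :
    ∑' p, f p = ∑' n, ∑ p ∈ antidiagonal n, f p := by
  conv_rhs => congr; ext; rw [← Finset.sum_finset_coe, ← tsum_fintype (L := .unconditional _)]
  rw [← HasAntidiagonal.sigmaAntidiagonalEquivProd.tsum_eq f]
  exact (HasAntidiagonal.sigmaAntidiagonalEquivProd.summable_iff.2 hf).tsum_sigma'
    fun n ↦ (hasSum_fintype _).summable

theorem one_add_neg_one_pow_succ_of_even {R : Type*} [Ring R] {n : ℕ} (hn : Even n) :
    1 + (-1 : R) ^ (n + 1) = 0 := by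
  rw [hn.add_one.neg_one_pow, add_neg_cancel]

theorem one_add_neg_one_pow_two_mul_add_two {R : Type*} [Ring R] (k : ℕ) :
    1 + (-1 : R) ^ (2 * k + 1 + 1) = 2 := by
  rw [show 2 * k + 1 + 1 = 2 * (k + 1) by ring, pow_mul, neg_one_sq, one_pow, one_add_one_eq_two]

theorem tsum_one_add_neg_one_pow_succ_mul (f : ℕ → ℝ) :
    ∑' n, (1 + (-1) ^ (n + 1)) * f n = 2 * ∑' k, f (2 * k + 1) := by
  have hsupp : (Function.support fun n ↦ (1 + (-1 : ℝ) ^ (n + 1)) * f n) ⊆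
      Set.range fun k ↦ 2 * k + 1 := by
    intro n hn
    obtain ⟨k, rfl⟩ := (Nat.even_or_odd n).resolve_left fun he ↦
      hn (by simp only [one_add_neg_one_pow_succ_of_even he, zero_mul])
    exact ⟨k, rfl⟩
  have hinj : Function.Injective fun k ↦ 2 * k + 1 := fun a b h ↦ by simpa using h
  rw [← hinj.tsum_eq hsupp, ← tsum_mul_left]
  simp only [one_add_neg_one_pow_two_mul_add_two]

theorem summable_one_div_succ_pow_three : Summable fun n : ℕ ↦ (1 : ℝ) / ((n : ℝ) + 1) ^ 3 := by
  simpa using (summable_nat_add_iff 1).2 (Real.summable_one_div_nat_pow.2 (by norm_num : 1 < 3))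

theorem tsum_neg_one_pow_succ_div_succ_pow_three :
    ∑' n : ℕ, (-1 : ℝ) ^ (n + 1) / ((n : ℝ) + 1) ^ 3 = -(3 / 4) * zeta3 := by
  have hodd (k : ℕ) :
      (1 : ℝ) / (((2 * k + 1 : ℕ) : ℝ) + 1) ^ 3 = 1 / 8 * (1 / ((k : ℝ) + 1) ^ 3) := by
    push_cast
    field_simp
    ring
  have h := tsum_one_add_neg_one_pow_succ_mul fun n : ℕ ↦ (1 : ℝ) / ((n : ℝ) + 1) ^ 3
  simp only [hodd, tsum_mul_left, add_mul, one_mul] at h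
  have hs : Summable fun n : ℕ ↦ (-1 : ℝ) ^ (n + 1) * (1 / ((n : ℝ) + 1) ^ 3) :=
    summable_one_div_succ_pow_three.mul_of_abs_le_one fun n ↦ by simp
  rw [summable_one_div_succ_pow_three.tsum_add hs] at h
  simp only [mul_one_div] at h
  rw [zeta3]
  linarith

/-- `tornheim (a - 1, b - 1) = 1 / (a b (a + b))`, so that `ℕ × ℕ` indexes pairs of positive
integers. -/
noncomputable def tornheim (p : ℕ × ℕ) : ℝ :=
  1 / (((p.1 : ℝ) + 1) * ((p.2 : ℝ) + 1) * ((p.1 : ℝ) + p.2 + 2))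

theorem tornheim_nonneg (p : ℕ × ℕ) : 0 ≤ tornheim p := by
  unfold tornheim; positivity

theorem tornheim_swap (p : ℕ × ℕ) : tornheim p.swap = tornheim p := by
  simp only [tornheim, Prod.fst_swap, Prod.snd_swap]
  ring_nf

theorem tornheim_odd_odd (a b : ℕ) : tornheim (2 * a + 1, 2 * b + 1) = tornheim (a, b) / 8 := by
  simp only [tornheim]
  push_cast
  field_simp
  ring

theorem tornheim_le_mul (p : ℕ × ℕ) :
    tornheim p ≤ (((p.1 : ℝ) + 1) ^ (3 / 2 : ℝ))⁻¹ * (((p.2 : ℝ) + 1) ^ (3 / 2 : ℝ))⁻¹ := by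
  set x : ℝ := (p.1 : ℝ) + 1
  set y : ℝ := (p.2 : ℝ) + 1
  have hx : 0 < x := by positivity
  have hy : 0 < y := by positivity
  have hsqrt : √(x * y) ≤ x + y :=
    Real.sqrt_le_iff.2 ⟨by positivity, by nlinarith⟩
  have hpow : (x * y) ^ (3 / 2 : ℝ) = x * y * √(x * y) := by
    rw [show (3 / 2 : ℝ) = 1 + 1 / 2 by norm_num, Real.rpow_add (by positivity), Real.rpow_one,
      Real.sqrt_eq_rpow]
  calc tornheim p = 1 / (x * y * (x + y)) := by simp only [tornheim, x, y]; ring_nf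
    _ ≤ 1 / (x * y) ^ (3 / 2 : ℝ) := by
        rw [hpow]
        exact one_div_le_one_div_of_le (by positivity) (by gcongr)
    _ = (x ^ (3 / 2 : ℝ))⁻¹ * (y ^ (3 / 2 : ℝ))⁻¹ := by
        rw [Real.mul_rpow hx.le hy.le, one_div, mul_inv]

theorem summable_tornheim : Summable tornheim := by
  have hb : Summable fun n : ℕ ↦ (((n : ℝ) + 1) ^ (3 / 2 : ℝ))⁻¹ := by
    simpa using
      (summable_nat_add_iff 1).2 (Real.summable_nat_rpow_inv.2 (by norm_num : (1 : ℝ) < 3 / 2))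
  exact (hb.mul_of_nonneg hb (fun n ↦ by positivity) fun n ↦ by positivity).of_nonneg_of_le
    tornheim_nonneg tornheim_le_mul

theorem hasSum_tornheim_row (m : ℕ) :
    HasSum (fun n ↦ tornheim (m, n)) (H (m + 1) / ((m : ℝ) + 1) ^ 2) := by
  have htel := hasSum_sub_add_of_antitone (f := fun n : ℕ ↦ 1 / ((n : ℝ) + 1))
    (fun a b h ↦ by dsimp only; gcongr) tendsto_one_div_add_atTop_nhds_zero_nat (m + 1)
  have hrow (n : ℕ) : tornheim (m, n) =
      (1 / ((n : ℝ) + 1) - 1 / (((n + (m + 1) : ℕ) : ℝ) + 1)) / ((m : ℝ) + 1) ^ 2 := by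
    simp only [tornheim]
    push_cast
    field_simp
    ring
  rw [funext hrow]
  exact htel.div_const _

theorem sum_antidiagonal_tornheim (N : ℕ) :
    ∑ p ∈ antidiagonal N, tornheim p = 2 * H (N + 1) / ((N : ℝ) + 2) ^ 2 := by
  have hpf : ∀ p ∈ antidiagonal N,
      tornheim p = (1 / ((p.1 : ℝ) + 1) + 1 / ((p.2 : ℝ) + 1)) / ((N : ℝ) + 2) ^ 2 := by
    intro p hp
    have hN : (p.1 : ℝ) + p.2 = N := by exact_mod_cast mem_antidiagonal.1 hp
    simp only [tornheim]
    rw [← hN]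
    field_simp
    ring
  have hH : ∑ p ∈ antidiagonal N, 1 / ((p.1 : ℝ) + 1) = H (N + 1) :=
    Nat.sum_antidiagonal_eq_sum_range_succ (fun k _ ↦ 1 / ((k : ℝ) + 1)) N
  have hH' : ∑ p ∈ antidiagonal N, 1 / ((p.2 : ℝ) + 1) = H (N + 1) := by
    rw [← Nat.sum_antidiagonal_swap]
    exact hH
  rw [sum_congr rfl hpf, ← sum_div, sum_add_distrib, hH, hH']
  ring

theorem tsum_succ_eq_tsum_of_eq_zero {M : Type*} [AddCommMonoid M] [TopologicalSpace M]
    {f : ℕ → M} (h0 : f 0 = 0) : ∑' n, f (n + 1) = ∑' n, f n :=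
  Nat.succ_injective.tsum_eq fun n hn ↦
    (Nat.exists_eq_succ_of_ne_zero fun h ↦ hn (by rw [h]; exact h0)).imp fun _ hk ↦ hk.symm

theorem summable_harmonic_div_sq : Summable fun m : ℕ ↦ H (m + 1) / ((m : ℝ) + 1) ^ 2 :=
  summable_tornheim.prod.congr fun m ↦ (hasSum_tornheim_row m).tsum_eq

theorem tsum_mul_tornheim_eq_tsum_rows {c : ℕ → ℝ} (hc : ∀ n, |c n| ≤ 1) :
    ∑' p, c p.1 * tornheim p = ∑' m, c m * H (m + 1) / ((m : ℝ) + 1) ^ 2 := by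
  rw [(summable_tornheim.mul_of_abs_le_one fun p ↦ hc p.1).tsum_prod]
  refine tsum_congr fun m ↦ ?_
  rw [mul_div_assoc, ← (hasSum_tornheim_row m).tsum_eq, ← tsum_mul_left]

theorem tsum_mul_tornheim_eq_tsum_antidiagonal {c : ℕ → ℝ} (hc : ∀ n, |c n| ≤ 1) :
    ∑' p, c (p.1 + p.2 + 1) * tornheim p = 2 * ∑' n, c n * H n / ((n : ℝ) + 1) ^ 2 := by
  have hdiag (N : ℕ) : ∑ p ∈ antidiagonal N, c (p.1 + p.2 + 1) * tornheim p =
      2 * (c (N + 1) * H (N + 1) / (((N + 1 : ℕ) : ℝ) + 1) ^ 2) := by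
    rw [sum_congr rfl fun p hp ↦ by rw [mem_antidiagonal.1 hp], ← mul_sum,
      sum_antidiagonal_tornheim]
    push_cast
    ring
  rw [(summable_tornheim.mul_of_abs_le_one fun p ↦ hc _).tsum_prod_eq_tsum_sum_antidiagonal,
    tsum_congr hdiag, tsum_mul_left]
  congr 1
  exact tsum_succ_eq_tsum_of_eq_zero (f := fun n ↦ c n * H n / ((n : ℝ) + 1) ^ 2) (by simp [H])

theorem tsum_mul_harmonic_div_sq {c : ℕ → ℝ} (hc : ∀ n, |c n| ≤ 1) :
    ∑' n, c n * H n / ((n : ℝ) + 1) ^ 2 =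
      ∑' n, c n * H (n + 1) / ((n : ℝ) + 1) ^ 2 - ∑' n, c n / ((n : ℝ) + 1) ^ 3 := by
  have hE : Summable fun n ↦ c n * H (n + 1) / ((n : ℝ) + 1) ^ 2 := by
    simpa only [mul_div_assoc] using summable_harmonic_div_sq.mul_of_abs_le_one hc
  have hZ : Summable fun n ↦ c n / ((n : ℝ) + 1) ^ 3 := by
    simpa only [mul_one_div] using summable_one_div_succ_pow_three.mul_of_abs_le_one hc
  rw [← hE.tsum_sub hZ]
  refine tsum_congr fun n ↦ ?_
  rw [show H (n + 1) = H n + 1 / ((n : ℝ) + 1) from sum_range_succ _ _]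
  field_simp
  ring

theorem tsum_tornheim : ∑' p, tornheim p = 2 * zeta3 := by
  have hrows := tsum_mul_tornheim_eq_tsum_rows (c := fun _ ↦ 1) (by simp)
  have hdiag := tsum_mul_tornheim_eq_tsum_antidiagonal (c := fun _ ↦ 1) (by simp)
  rw [tsum_mul_harmonic_div_sq (by simp)] at hdiag
  simp only [one_mul] at hrows hdiag
  rw [zeta3]
  linarith

theorem tsum_neg_one_pow_mul_tornheim :
    ∑' p, (-1 : ℝ) ^ (p.1 + p.2 + 1 + 1) * tornheim p =
      2 * ∑' n, (-1 : ℝ) ^ (n + 1) * H (n + 1) / ((n : ℝ) + 1) ^ 2 + 3 / 2 * zeta3 := by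
  have hsign (n : ℕ) : |(-1 : ℝ) ^ (n + 1)| ≤ 1 := by simp
  rw [tsum_mul_tornheim_eq_tsum_antidiagonal hsign, tsum_mul_harmonic_div_sq hsign,
    tsum_neg_one_pow_succ_div_succ_pow_three]
  ring

theorem tsum_one_add_neg_one_pow_mul_tornheim :
    ∑' p, (1 + (-1 : ℝ) ^ (p.1 + 1)) * (1 + (-1) ^ (p.2 + 1)) * tornheim p =
      (∑' p, tornheim p) / 2 := by
  let i : ℕ × ℕ → ℕ × ℕ := fun q ↦ (2 * q.1 + 1, 2 * q.2 + 1)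
  have hinj : Function.Injective i := fun q r h ↦ by
    simp only [i, Prod.mk.injEq] at h
    exact Prod.ext (by omega) (by omega)
  have hsupp : (Function.support fun p : ℕ × ℕ ↦
      (1 + (-1 : ℝ) ^ (p.1 + 1)) * (1 + (-1) ^ (p.2 + 1)) * tornheim p) ⊆ Set.range i := by
    intro p hp
    obtain ⟨a, ha⟩ := (Nat.even_or_odd p.1).resolve_left fun he ↦
      hp (by simp only [one_add_neg_one_pow_succ_of_even he, zero_mul])
    obtain ⟨b, hb⟩ := (Nat.even_or_odd p.2).resolve_left fun he ↦
      hp (by simp only [one_add_neg_one_pow_succ_of_even he, mul_zero, zero_mul])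
    exact ⟨(a, b), Prod.ext ha.symm hb.symm⟩
  rw [← hinj.tsum_eq hsupp, ← tsum_div_const]
  refine tsum_congr fun q ↦ ?_
  simp only [i, one_add_neg_one_pow_two_mul_add_two, tornheim_odd_odd]
  ring

theorem tsum_tornheim_parity :
    (∑' p, tornheim p) + 2 * ∑' p, (-1 : ℝ) ^ (p.1 + 1) * tornheim p +
      ∑' p, (-1 : ℝ) ^ (p.1 + p.2 + 1 + 1) * tornheim p = (∑' p, tornheim p) / 2 := by
  have hs (k : ℕ × ℕ → ℕ) : Summable fun p ↦ (-1 : ℝ) ^ k p * tornheim p :=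
    summable_tornheim.mul_of_abs_le_one fun p ↦ by simp
  have hswap :
      ∑' p, (-1 : ℝ) ^ (p.2 + 1) * tornheim p = ∑' p, (-1 : ℝ) ^ (p.1 + 1) * tornheim p := by
    rw [← (Equiv.prodComm ℕ ℕ).tsum_eq]
    exact tsum_congr fun p ↦ by rw [Equiv.prodComm_apply, tornheim_swap, Prod.snd_swap]
  have hexpand (p : ℕ × ℕ) :
      (1 + (-1 : ℝ) ^ (p.1 + 1)) * (1 + (-1) ^ (p.2 + 1)) * tornheim p =
        tornheim p + (-1) ^ (p.1 + 1) * tornheim p + (-1) ^ (p.2 + 1) * tornheim p +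
          (-1) ^ (p.1 + p.2 + 1 + 1) * tornheim p := by
    rw [show p.1 + p.2 + 1 + 1 = (p.1 + 1) + (p.2 + 1) by ring, pow_add]
    ring
  rw [← tsum_one_add_neg_one_pow_mul_tornheim, tsum_congr hexpand,
    ((summable_tornheim.add (hs _)).add (hs _)).tsum_add (hs _),
    (summable_tornheim.add (hs _)).tsum_add (hs _), summable_tornheim.tsum_add (hs _), hswap]
  ring

theorem stmt4 : ∑' n : ℕ, (-1:ℝ)^(n+1) * H (n+1) / ((n:ℝ)+1)^2 = -(5/8) * zeta3 := by
  have hrows := tsum_mul_tornheim_eq_tsum_rows (c := fun n ↦ (-1 : ℝ) ^ (n + 1)) fun n ↦ by simp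
  have hparity := tsum_tornheim_parity
  rw [hrows, tsum_neg_one_pow_mul_tornheim, tsum_tornheim] at hparity
  linarith
end

section
/- The double series ∑_{n=1}^∞ ∑_{k=1}^∞ k / (n (1+k)² (n+k)) equals ζ(3). -/
open scoped BigOperators

open Finset Filter Topology

/-!
Swapping the two sums, the inner sum over `n` telescopes to `H (k + 1) / (k + 2) ^ 2`, so the
claim is Euler's identity `∑ H (k + 1) / (k + 2) ^ 2 = ζ(3)`. Write `U` for that series and
`W = ∑_{a,b} 1 / ((a + 1) (b + 1) (a + b + 2))`. Summing `W` over `b` first telescopes again and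
gives `∑ H (a + 1) / (a + 1) ^ 2 = U + ζ(3)`, because `H (a + 2) = H (a + 1) + 1 / (a + 2)`.
On the other hand `1 / (x y (x + y)) = 1 / (x (x + y) ^ 2) + 1 / (y (x + y) ^ 2)`, and grouping the
terms of `∑_{a,b} 1 / ((a + 1) (a + b + 2) ^ 2)` by `a + b` gives `U` again; hence `W = 2 U`.
-/

theorem Antitone.hasSum_sub_add {f : ℕ → ℝ} (hf : Antitone f) (h0 : Tendsto f atTop (𝓝 0))
    (c : ℕ) : HasSum (fun n ↦ f n - f (n + c)) (∑ i ∈ range c, f i) := by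
  rw [hasSum_iff_tendsto_nat_of_nonneg fun n ↦ sub_nonneg.2 (hf (by omega))]
  have hpartial (N : ℕ) : ∑ n ∈ range N, (f n - f (n + c)) =
      ∑ i ∈ range c, f i - ∑ i ∈ range c, f (N + i) := by
    have h₁ := sum_range_add f N c
    have h₂ := sum_range_add f c N
    simp only [sum_sub_distrib, add_comm _ c]
    rw [add_comm N c] at h₁
    linarith
  have htail : Tendsto (fun N ↦ ∑ i ∈ range c, f (N + i)) atTop (𝓝 0) := by
    simpa using tendsto_finsetSum (range c) fun i _ ↦ h0.comp (tendsto_add_atTop_nat i)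
  simpa [hpartial] using tendsto_const_nhds.sub htail

theorem HasSum.sum_antidiagonal {α : Type*} [AddCommMonoid α] [TopologicalSpace α]
    [ContinuousAdd α] [RegularSpace α] {f : ℕ × ℕ → α} {a : α} (hf : HasSum f a) :
    HasSum (fun n ↦ ∑ p ∈ antidiagonal n, f p) a := by
  refine (HasAntidiagonal.sigmaAntidiagonalEquivProd.hasSum_iff.2 hf).sigma fun n ↦ ?_
  rw [← sum_coe_sort]
  exact hasSum_fintype _

lemma H_succ (n : ℕ) : H (n + 1) = H n + 1 / ((n : ℝ) + 1) := by
  simp [H, sum_range_succ]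

lemma hasSum_div_mul_add (c : ℕ) :
    HasSum (fun n : ℕ ↦ (c : ℝ) / (((n : ℝ) + 1) * ((n : ℝ) + c + 1))) (H c) := by
  have hanti : Antitone fun n : ℕ ↦ 1 / ((n : ℝ) + 1) :=
    fun m n hmn ↦ one_div_le_one_div_of_le (by positivity) (by gcongr)
  convert hanti.hasSum_sub_add tendsto_one_div_add_atTop_nhds_zero_nat c using 1
  · ext n
    push_cast
    field_simp
    ring
  · rfl

lemma one_div_mul_mul_add_le {x y : ℝ} (hx : 0 < x) (hy : 0 < y) :
    1 / (x * y * (x + y)) ≤ 1 / (x * √x) * (1 / (y * √y)) := by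
  have hsqrt : √x * √y ≤ x + y := by
    rw [← Real.sqrt_mul hx.le, Real.sqrt_le_left (by positivity)]
    nlinarith
  rw [one_div_mul_one_div]
  refine one_div_le_one_div_of_le (by positivity) ?_
  calc x * √x * (y * √y) = x * y * (√x * √y) := by ring
    _ ≤ x * y * (x + y) := by gcongr

lemma summable_one_div_mul_sqrt : Summable fun n : ℕ ↦ 1 / (((n : ℝ) + 1) * √((n : ℝ) + 1)) := by
  have h := (summable_nat_add_iff 1).2 (Real.summable_nat_rpow.2 (by norm_num : -(3 / 2 : ℝ) < -1))
  refine h.congr fun n ↦ ?_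
  have hx : (0 : ℝ) < n + 1 := by positivity
  rw [Nat.cast_succ, Real.rpow_neg hx.le, show (3 / 2 : ℝ) = 1 + 1 / 2 by norm_num,
    Real.rpow_add hx, Real.rpow_one, ← Real.sqrt_eq_rpow, one_div]

lemma summable_one_div_mul_mul_add :
    Summable fun p : ℕ × ℕ ↦ 1 / (((p.1 : ℝ) + 1) * ((p.2 : ℝ) + 1) * ((p.1 : ℝ) + p.2 + 2)) := by
  refine (summable_one_div_mul_sqrt.mul_of_nonneg summable_one_div_mul_sqrt
    (fun _ ↦ by positivity) (fun _ ↦ by positivity)).of_nonneg_of_le (fun _ ↦ by positivity)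
    fun p ↦ ?_
  convert one_div_mul_mul_add_le (x := (p.1 : ℝ) + 1) (y := (p.2 : ℝ) + 1) (by positivity)
    (by positivity) using 3
  ring

lemma summable_div_mul_sq_mul_add :
    Summable (Function.uncurry fun n k : ℕ ↦
      ((k : ℝ) + 1) / (((n : ℝ) + 1) * ((k : ℝ) + 2) ^ 2 * ((n : ℝ) + k + 2))) := by
  refine summable_one_div_mul_mul_add.of_nonneg_of_le
    (fun _ ↦ by dsimp [Function.uncurry]; positivity) fun (n, k) ↦ ?_
  rw [Function.uncurry_apply_pair, div_le_div_iff₀ (by positivity) (by positivity)]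
  have : ((k : ℝ) + 1) ^ 2 ≤ ((k : ℝ) + 2) ^ 2 := by gcongr; linarith
  have hpos : (0 : ℝ) ≤ ((n : ℝ) + 1) * ((n : ℝ) + k + 2) := by positivity
  nlinarith

lemma hasSum_one_div_mul_mul_add (a : ℕ) :
    HasSum (fun b : ℕ ↦ 1 / (((a : ℝ) + 1) * ((b : ℝ) + 1) * ((a : ℝ) + b + 2)))
      (H (a + 1) / ((a : ℝ) + 1) ^ 2) := by
  refine ((hasSum_div_mul_add (a + 1)).div_const _).congr_fun fun b ↦ ?_
  push_cast
  field_simp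
  ring

lemma hasSum_div_mul_sq_mul_add (k : ℕ) :
    HasSum (fun n : ℕ ↦ ((k : ℝ) + 1) / (((n : ℝ) + 1) * ((k : ℝ) + 2) ^ 2 * ((n : ℝ) + k + 2)))
      (H (k + 1) / ((k : ℝ) + 2) ^ 2) := by
  refine ((hasSum_div_mul_add (k + 1)).div_const _).congr_fun fun n ↦ ?_
  push_cast
  field_simp
  ring

lemma one_div_mul_mul_add_eq (a b : ℕ) :
    1 / (((a : ℝ) + 1) * ((b : ℝ) + 1) * ((a : ℝ) + b + 2)) =
      1 / (((a : ℝ) + 1) * ((a : ℝ) + b + 2) ^ 2) +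
        1 / (((b : ℝ) + 1) * ((b : ℝ) + a + 2) ^ 2) := by
  field_simp
  ring

lemma sum_antidiagonal_one_div_mul_sq (N : ℕ) :
    ∑ p ∈ antidiagonal N, 1 / (((p.1 : ℝ) + 1) * ((p.1 : ℝ) + p.2 + 2) ^ 2) =
      H (N + 1) / ((N : ℝ) + 2) ^ 2 := by
  have hcast (p : ℕ × ℕ) (hp : p ∈ antidiagonal N) : (p.1 : ℝ) + p.2 = N := by
    rw [← Nat.cast_add, mem_antidiagonal.1 hp]
  rw [sum_congr rfl fun p hp ↦ by rw [add_assoc, ← add_assoc _ (p.2 : ℝ), hcast p hp, ← div_div],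
    ← sum_div, Nat.sum_antidiagonal_eq_sum_range_succ_mk]
  rfl

lemma hasSum_one_div_add_one_pow_three : HasSum (fun n : ℕ ↦ 1 / ((n : ℝ) + 1) ^ 3) zeta3 := by
  refine Summable.hasSum ?_
  simpa using (summable_nat_add_iff 1).2 (Real.summable_one_div_nat_pow.2 (by norm_num : 1 < 3))

lemma summable_one_div_mul_add_sq :
    Summable fun p : ℕ × ℕ ↦ 1 / (((p.1 : ℝ) + 1) * ((p.1 : ℝ) + p.2 + 2) ^ 2) :=
  summable_one_div_mul_mul_add.of_nonneg_of_le (fun _ ↦ by positivity) fun p ↦ by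
    rw [one_div_mul_mul_add_eq p.1 p.2]
    exact le_add_of_nonneg_right (by positivity)

lemma tsum_one_div_mul_mul_add :
    ∑' p : ℕ × ℕ, 1 / (((p.1 : ℝ) + 1) * ((p.2 : ℝ) + 1) * ((p.1 : ℝ) + p.2 + 2)) =
      2 * ∑' p : ℕ × ℕ, 1 / (((p.1 : ℝ) + 1) * ((p.1 : ℝ) + p.2 + 2) ^ 2) := by
  have hu := summable_one_div_mul_add_sq.hasSum
  refine summable_one_div_mul_mul_add.hasSum.unique ?_
  rw [two_mul]
  exact (hu.add ((Equiv.prodComm ℕ ℕ).hasSum_iff.2 hu)).congr_fun fun p ↦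
    one_div_mul_mul_add_eq p.1 p.2

lemma hasSum_H_succ_div_sq_tsum_one_div_mul_add_sq :
    HasSum (fun k : ℕ ↦ H (k + 1) / ((k : ℝ) + 2) ^ 2)
      (∑' p : ℕ × ℕ, 1 / (((p.1 : ℝ) + 1) * ((p.1 : ℝ) + p.2 + 2) ^ 2)) := by
  simpa only [sum_antidiagonal_one_div_mul_sq] using
    summable_one_div_mul_add_sq.hasSum.sum_antidiagonal

lemma hasSum_H_succ_div_sq_tsum_one_div_mul_mul_add_sub_zeta3 :
    HasSum (fun k : ℕ ↦ H (k + 1) / ((k : ℝ) + 2) ^ 2)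
      (∑' p : ℕ × ℕ, 1 / (((p.1 : ℝ) + 1) * ((p.2 : ℝ) + 1) * ((p.1 : ℝ) + p.2 + 2)) - zeta3) := by
  set W := ∑' p : ℕ × ℕ, 1 / (((p.1 : ℝ) + 1) * ((p.2 : ℝ) + 1) * ((p.1 : ℝ) + p.2 + 2))
  have hS : HasSum (fun a : ℕ ↦ H (a + 1) / ((a : ℝ) + 1) ^ 2) W :=
    summable_one_div_mul_mul_add.hasSum.prod_fiberwise hasSum_one_div_mul_mul_add
  have hshift (k : ℕ) : H (k + 1 + 1) / (((k + 1 : ℕ) : ℝ) + 1) ^ 2 -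
      1 / (((k + 1 : ℕ) : ℝ) + 1) ^ 3 = H (k + 1) / ((k : ℝ) + 2) ^ 2 := by
    rw [H_succ]
    push_cast
    field_simp
    ring
  have hval : W - zeta3 = W - ∑ i ∈ range 1, H (i + 1) / ((i : ℝ) + 1) ^ 2 -
      (zeta3 - ∑ i ∈ range 1, 1 / ((i : ℝ) + 1) ^ 3) := by
    simp [H]
  rw [hval]
  exact (((hasSum_nat_add_iff' 1).2 hS).sub
    ((hasSum_nat_add_iff' 1).2 hasSum_one_div_add_one_pow_three)).congr_fun fun k ↦ (hshift k).symm

lemma hasSum_H_succ_div_sq : HasSum (fun k : ℕ ↦ H (k + 1) / ((k : ℝ) + 2) ^ 2) zeta3 := by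
  have h := hasSum_H_succ_div_sq_tsum_one_div_mul_add_sq.unique
    hasSum_H_succ_div_sq_tsum_one_div_mul_mul_add_sub_zeta3
  rw [tsum_one_div_mul_mul_add] at h
  convert hasSum_H_succ_div_sq_tsum_one_div_mul_add_sq using 1
  linarith

theorem stmt11 : ∑' n : ℕ, ∑' k : ℕ,
    ((k:ℝ)+1) / (((n:ℝ)+1) * ((k:ℝ)+2)^2 * ((n:ℝ)+(k:ℝ)+2)) = zeta3 := by
  rw [← summable_div_mul_sq_mul_add.tsum_comm,
    tsum_congr fun k ↦ (hasSum_div_mul_sq_mul_add k).tsum_eq]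
  exact hasSum_H_succ_div_sq.tsum_eq
end
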